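/- Let V be a real inner product space and let f, c, f', f_opt, f_app ∈ V be nonzero vectors. Denote by ∠(u, v) = arccos(⟪u, v⟫ / (‖u‖·‖v‖)) the angle between nonzero vectors. If ∠(f_app, c) ≤ ∠(f', c), then ∠(f, f_app) ≤ ∠(f, f_opt) + ∠(f_opt, f') + 2·∠(f, c). -/
import Mathlib

open Real InnerProductGeometry
open scoped RealInnerProductSpace

private lemma key_cos_ineq {V : Type*} [NormedAddCommGroup V] [InnerProductSpace ℝ V]
    (x y z : V) (hy : y ≠ 0) :
    Real.cos (angle x y + angle y z) * (‖x‖ * ‖z‖) ≤ ⟪x, z⟫ := by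
  have hny : (0 : ℝ) < ⟪y, y⟫ := by
    rw [real_inner_self_eq_norm_mul_norm]
    exact mul_pos (norm_pos_iff.2 hy) (norm_pos_iff.2 hy)
  set A : ℝ := ⟪x, x⟫ * ⟪y, y⟫ - ⟪x, y⟫ * ⟪x, y⟫ with hAdef
  set B : ℝ := ⟪y, y⟫ * ⟪z, z⟫ - ⟪y, z⟫ * ⟪y, z⟫ with hBdef
  have hA : 0 ≤ A := by
    have := real_inner_mul_inner_self_le x y
    simp only [hAdef]; linarith
  have hB : 0 ≤ B := by
    have := real_inner_mul_inner_self_le y z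
    simp only [hBdef]; linarith
  -- projection vectors
  set p : V := ⟪y, y⟫ • x - ⟪x, y⟫ • y with hpdef
  set q : V := ⟪y, y⟫ • z - ⟪y, z⟫ • y with hqdef
  have hpq : ⟪p, q⟫ = ⟪y, y⟫ * (⟪y, y⟫ * ⟪x, z⟫ - ⟪x, y⟫ * ⟪y, z⟫) := by
    simp only [hpdef, hqdef, inner_sub_left, inner_sub_right, real_inner_smul_left,
      real_inner_smul_right]
    rw [real_inner_comm y x, real_inner_comm z y]
    ring_nf
  have hpp : ⟪p, p⟫ = ⟪y, y⟫ * A := by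
    simp only [hpdef, inner_sub_left, inner_sub_right, real_inner_smul_left,
      real_inner_smul_right, hAdef]
    rw [real_inner_comm y x]
    ring
  have hqq : ⟪q, q⟫ = ⟪y, y⟫ * B := by
    simp only [hqdef, inner_sub_left, inner_sub_right, real_inner_smul_left,
      real_inner_smul_right, hBdef]
    rw [real_inner_comm z y]
    ring
  have hnp : ‖p‖ = Real.sqrt (⟪y, y⟫ * A) := by
    rw [← hpp, real_inner_self_eq_norm_mul_norm, Real.sqrt_mul_self (norm_nonneg _)]
  have hnq : ‖q‖ = Real.sqrt (⟪y, y⟫ * B) := by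
    rw [← hqq, real_inner_self_eq_norm_mul_norm, Real.sqrt_mul_self (norm_nonneg _)]
  have hprod : ‖p‖ * ‖q‖ = ⟪y, y⟫ * (Real.sqrt A * Real.sqrt B) := by
    rw [hnp, hnq, Real.sqrt_mul hny.le, Real.sqrt_mul hny.le,
      show Real.sqrt ⟪y, y⟫ * Real.sqrt A * (Real.sqrt ⟪y, y⟫ * Real.sqrt B)
        = (Real.sqrt ⟪y, y⟫ * Real.sqrt ⟪y, y⟫) * (Real.sqrt A * Real.sqrt B) by ring,
      Real.mul_self_sqrt hny.le]
  -- Cauchy–Schwarz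
  have hcs : -(‖p‖ * ‖q‖) ≤ ⟪p, q⟫ := by
    have h1 := abs_real_inner_le_norm p q
    have h2 := neg_abs_le (⟪p, q⟫ : ℝ)
    linarith
  have hmain : ⟪x, y⟫ * ⟪y, z⟫ - Real.sqrt A * Real.sqrt B ≤ ⟪x, z⟫ * ⟪y, y⟫ := by
    rw [hpq, hprod] at hcs
    nlinarith [hny]
  -- translate the trig expressions
  have hcxy := cos_angle_mul_norm_mul_norm x y
  have hcyz := cos_angle_mul_norm_mul_norm y z
  have hsxy := sin_angle_mul_norm_mul_norm x y
  have hsyz := sin_angle_mul_norm_mul_norm y z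
  rw [Real.cos_add]
  have hyn : (0 : ℝ) < ‖y‖ := norm_pos_iff.2 hy
  rw [real_inner_self_eq_norm_mul_norm] at hmain hny
  have hfin : ((Real.cos (angle x y) * Real.cos (angle y z) -
      Real.sin (angle x y) * Real.sin (angle y z)) * (‖x‖ * ‖z‖)) * (‖y‖ * ‖y‖)
      ≤ ⟪x, z⟫ * (‖y‖ * ‖y‖) := by
    have e1 : ((Real.cos (angle x y) * Real.cos (angle y z) -
        Real.sin (angle x y) * Real.sin (angle y z)) * (‖x‖ * ‖z‖)) * (‖y‖ * ‖y‖)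
        = (Real.cos (angle x y) * (‖x‖ * ‖y‖)) * (Real.cos (angle y z) * (‖y‖ * ‖z‖))
          - (Real.sin (angle x y) * (‖x‖ * ‖y‖)) * (Real.sin (angle y z) * (‖y‖ * ‖z‖)) := by
      ring
    rw [e1, hcxy, hcyz, hsxy, hsyz, ← hAdef, ← hBdef]
    exact hmain
  exact le_of_mul_le_mul_right hfin hny

private lemma angle_triangle' {V : Type*} [NormedAddCommGroup V] [InnerProductSpace ℝ V]
    (x y z : V) (hy : y ≠ 0) : angle x z ≤ angle x y + angle y z := by
  by_cases hπ : angle x y + angle y z ≤ π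
  · have hkey := key_cos_ineq x y z hy
    have hcos : Real.cos (angle x y + angle y z) ≤ Real.cos (angle x z) := by
      by_cases hxz : x = 0 ∨ z = 0
      · have h1 : ⟪x, z⟫ = 0 := by
          rcases hxz with h | h <;> simp [h]
        have h2 : Real.cos (angle x z) = 0 := by
          rcases hxz with h | h <;> simp [h, angle_zero_left, angle_zero_right]
        rw [h2]
        rcases hxz with h | h
        · rw [h, angle_zero_left, Real.cos_add, Real.cos_pi_div_two, Real.sin_pi_div_two]
          have hs := Real.sin_nonneg_of_nonneg_of_le_pi (angle_nonneg y z) (angle_le_pi y z)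
          nlinarith
        · rw [h, angle_zero_right, Real.cos_add, Real.cos_pi_div_two, Real.sin_pi_div_two]
          have hs := Real.sin_nonneg_of_nonneg_of_le_pi (angle_nonneg x y) (angle_le_pi x y)
          nlinarith
      · push_neg at hxz
        have hx0 : (0:ℝ) < ‖x‖ := norm_pos_iff.2 hxz.1
        have hz0 : (0:ℝ) < ‖z‖ := norm_pos_iff.2 hxz.2
        have := cos_angle_mul_norm_mul_norm x z
        have hpos : (0:ℝ) < ‖x‖ * ‖z‖ := mul_pos hx0 hz0
        rw [← this] at hkey
        exact le_of_mul_le_mul_right hkey hpos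
    have hmono : Real.arccos (Real.cos (angle x z))
        ≤ Real.arccos (Real.cos (angle x y + angle y z)) := by
      unfold Real.arccos
      have := Real.monotone_arcsin hcos
      linarith
    rwa [Real.arccos_cos (angle_nonneg x z) (angle_le_pi x z),
      Real.arccos_cos (add_nonneg (angle_nonneg _ _) (angle_nonneg _ _)) hπ] at hmono
  · push_neg at hπ
    exact (angle_le_pi x z).trans hπ.le

theorem stmt_10 {V : Type*} [NormedAddCommGroup V] [InnerProductSpace ℝ V]
    (f c f' fopt fapp : V) (hf : f ≠ 0) (hc : c ≠ 0) (hf' : f' ≠ 0)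
    (hopt : fopt ≠ 0) (happ : fapp ≠ 0)
    (h : InnerProductGeometry.angle fapp c ≤ InnerProductGeometry.angle f' c) :
    InnerProductGeometry.angle f fapp ≤
      InnerProductGeometry.angle f fopt + InnerProductGeometry.angle fopt f' +
        2 * InnerProductGeometry.angle f c := by
  have t1 : angle f fapp ≤ angle f c + angle c fapp := angle_triangle' f c fapp hc
  have t2 : angle f' c ≤ angle f' f + angle f c := angle_triangle' f' f c hf
  have t3 : angle f' f ≤ angle f' fopt + angle fopt f := angle_triangle' f' fopt f hopt
  have e1 : angle c fapp = angle fapp c := angle_comm c fapp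
  have e2 : angle f' fopt = angle fopt f' := angle_comm f' fopt
  have e3 : angle fopt f = angle f fopt := angle_comm fopt f
  linarith
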